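/- In a weakly exact category, let A• → A'• → A''• be a sequence of chain morphisms between admissible chain complexes such that for each i the sequence Aᵢ → A'ᵢ → A''ᵢ is short exact. Then there is a long exact sequence of cohomology objects ⋯ → Hⁱ(A•) → Hⁱ(A'•) → Hⁱ(A''•) → H^{i+1}(A•) → H^{i+1}(A'•) → H^{i+1}(A''•) → ⋯. -/
import Mathlib


open CategoryTheory CategoryTheory.Limits

universe v u

section Defs

variable {C : Type u} [Category.{v} C] [HasZeroMorphisms C]

/-- `i : K ⟶ A` is a kernel of `p : A ⟶ B`. -/
def IsKernelOf {K A B : C} (i : K ⟶ A) (p : A ⟶ B) : Prop :=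
  i ≫ p = 0 ∧ ∀ ⦃W : C⦄ (g : W ⟶ A), g ≫ p = 0 → ∃! h : W ⟶ K, h ≫ i = g

/-- `q : B ⟶ Q` is a cokernel of `i : A ⟶ B`. -/
def IsCokernelOf {A B Q : C} (q : B ⟶ Q) (i : A ⟶ B) : Prop :=
  i ≫ q = 0 ∧ ∀ ⦃W : C⦄ (g : B ⟶ W), i ≫ g = 0 → ∃! h : Q ⟶ W, q ≫ h = g

variable (D : MorphismProperty C)

/-- `A ⟶ B ⟶ Q` is a short exact sequence for the class of deflations `D`:
`p` is a deflation and `i` is a kernel of `p`. -/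
def IsShortExact {A B Q : C} (i : A ⟶ B) (p : B ⟶ Q) : Prop :=
  D p ∧ IsKernelOf i p

/-- An inflation is a kernel of some deflation. -/
def IsInflation {A B : C} (i : A ⟶ B) : Prop :=
  ∃ (Q : C) (p : B ⟶ Q), D p ∧ IsKernelOf i p

/-- The axioms for a weakly exact category: `D` is the class of deflations.
Axiom (0): isomorphisms and morphisms to a zero object are deflations;
Axiom (1): a deflation has a kernel and is a cokernel of its kernel;
Axiom (2): deflations are closed under composition;
Axiom (3): if `g ∘ f` and `f` are deflations then so is `g`;
Axiom (4): the 3×3 lemma. -/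
structure IsWeaklyExact : Prop where
  defl_of_isIso : ∀ ⦃X Y : C⦄ (f : X ⟶ Y), IsIso f → D f
  defl_to_zero : ∀ ⦃X Y : C⦄ (f : X ⟶ Y), IsZero Y → D f
  defl_kernel : ∀ ⦃X Y : C⦄ (p : X ⟶ Y), D p →
    ∃ (K : C) (i : K ⟶ X), IsKernelOf i p ∧ IsCokernelOf p i
  defl_comp : ∀ ⦃X Y Z : C⦄ (f : X ⟶ Y) (g : Y ⟶ Z), D f → D g → D (f ≫ g)
  defl_cancel : ∀ ⦃X Y Z : C⦄ (f : X ⟶ Y) (g : Y ⟶ Z), D (f ≫ g) → D f → D g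
  three_by_three : ∀ ⦃A₁ A₂ A₃ B₁ B₂ B₃ C₁ C₂ C₃ : C⦄
    (a₁ : A₁ ⟶ A₂) (a₂ : A₂ ⟶ A₃) (b₁ : B₁ ⟶ B₂) (b₂ : B₂ ⟶ B₃)
    (c₁ : C₁ ⟶ C₂) (c₂ : C₂ ⟶ C₃)
    (f₁ : A₁ ⟶ B₁) (f₂ : A₂ ⟶ B₂) (f₃ : A₃ ⟶ B₃)
    (g₁ : B₁ ⟶ C₁) (g₂ : B₂ ⟶ C₂) (g₃ : B₃ ⟶ C₃),
    a₁ ≫ f₂ = f₁ ≫ b₁ → a₂ ≫ f₃ = f₂ ≫ b₂ →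
    b₁ ≫ g₂ = g₁ ≫ c₁ → b₂ ≫ g₃ = g₂ ≫ c₂ →
    IsShortExact D f₁ g₁ → IsShortExact D f₂ g₂ → IsShortExact D f₃ g₃ →
    IsShortExact D b₁ b₂ → IsShortExact D c₁ c₂ →
    IsShortExact D a₁ a₂

end Defs

section ChainComplexData

variable {C : Type u} [Category.{v} C] [HasZeroMorphisms C]

/-- An admissible chain complex `(Xᵢ, dᵢ)` in a weakly exact category, with
each differential factored as a deflation `eᵢ` onto the image `Zᵢ` followed by
an inflation `mᵢ`, together with the canonical data computing its cohomology:
`cᵢ : X(i+1) ⟶ Coᵢ` a cokernel of `dᵢ`, `tᵢ : Coᵢ ⟶ Z(i+1)` the induced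
(deflation) characterised by `cᵢ ≫ tᵢ = e(i+1)`, and `Hhᵢ` the kernel of
`tᵢ` — so `Hhᵢ` is the `(i+1)`-st cohomology object `H^{i+1}`. -/
structure AdmComplexData (D : MorphismProperty C) where
  X : ℤ → C
  d : ∀ i : ℤ, X i ⟶ X (i + 1)
  dd : ∀ i : ℤ, d i ≫ d (i + 1) = 0
  Z : ℤ → C
  e : ∀ i : ℤ, X i ⟶ Z i
  m : ∀ i : ℤ, Z i ⟶ X (i + 1)
  fac : ∀ i : ℤ, e i ≫ m i = d i
  defl_e : ∀ i : ℤ, D (e i)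
  infl_m : ∀ i : ℤ, IsInflation D (m i)
  Co : ℤ → C
  c : ∀ i : ℤ, X (i + 1) ⟶ Co i
  coker : ∀ i : ℤ, IsCokernelOf (c i) (d i)
  t : ∀ i : ℤ, Co i ⟶ Z (i + 1)
  ht : ∀ i : ℤ, c i ≫ t i = e (i + 1)
  Hh : ℤ → C
  k : ∀ i : ℤ, Hh i ⟶ Co i
  ker : ∀ i : ℤ, IsKernelOf (k i) (t i)

/-- A chain morphism between admissible chain complexes, together with the
induced morphisms on the cokernels and on cohomology (each characterised by
the corresponding commutation relation, hence unique). -/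
structure ChainHomData (D : MorphismProperty C) (A B : AdmComplexData D) where
  f : ∀ i : ℤ, A.X i ⟶ B.X i
  comm : ∀ i : ℤ, A.d i ≫ f (i + 1) = f i ≫ B.d i
  fc : ∀ i : ℤ, A.Co i ⟶ B.Co i
  hfc : ∀ i : ℤ, A.c i ≫ fc i = f (i + 1) ≫ B.c i
  fH : ∀ i : ℤ, A.Hh i ⟶ B.Hh i
  hfH : ∀ i : ℤ, fH i ≫ B.k i = A.k i ≫ fc i

end ChainComplexData
section Helpers

variable {C : Type u} [Category.{v} C] [HasZeroMorphisms C] {D : MorphismProperty C}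

theorem IsKernelOf.hom_ext {K A B : C} {i : K ⟶ A} {p : A ⟶ B} (h : IsKernelOf i p)
    {W : C} {u v : W ⟶ K} (huv : u ≫ i = v ≫ i) : u = v := by
  have h0 : (v ≫ i) ≫ p = 0 := by rw [Category.assoc, h.1, comp_zero]
  obtain ⟨w, -, hw⟩ := h.2 (v ≫ i) h0
  exact (hw u huv).trans (hw v rfl).symm

theorem IsCokernelOf.hom_ext {A B Q : C} {q : B ⟶ Q} {i : A ⟶ B} (h : IsCokernelOf q i)
    {W : C} {u v : Q ⟶ W} (huv : q ≫ u = q ≫ v) : u = v := by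
  have h0 : i ≫ (q ≫ v) = 0 := by rw [← Category.assoc, h.1, zero_comp]
  obtain ⟨w, -, hw⟩ := h.2 (q ≫ v) h0
  exact (hw u huv).trans (hw v rfl).symm

theorem IsWeaklyExact.ses_coker (hD : IsWeaklyExact D) {A B Q : C} {i : A ⟶ B} {p : B ⟶ Q}
    (h : IsShortExact D i p) : IsCokernelOf p i := by
  obtain ⟨K, i0, hk, hc⟩ := hD.defl_kernel p h.1
  refine ⟨h.2.1, fun W g hg => ?_⟩
  obtain ⟨φ, hφ, -⟩ := h.2.2 i0 hk.1
  exact hc.2 g (by rw [← hφ, Category.assoc, hg, comp_zero])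

theorem IsWeaklyExact.defl_epi (hD : IsWeaklyExact D) {A B : C} {p : A ⟶ B} (hp : D p)
    {W : C} {u v : B ⟶ W} (h : p ≫ u = p ≫ v) : u = v := by
  obtain ⟨K, i0, hk, hc⟩ := hD.defl_kernel p hp
  exact hc.hom_ext h

theorem ses_id_zero (hD : IsWeaklyExact D) {A Z : C} (hZ : IsZero Z) :
    IsShortExact D (𝟙 A) (0 : A ⟶ Z) :=
  ⟨hD.defl_to_zero _ hZ, by simp, fun W g _ => ⟨g, by simp, fun y hy => by simpa using hy⟩⟩

theorem ses_zero_id (hD : IsWeaklyExact D) {A Z : C} (hZ : IsZero Z) :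
    IsShortExact D (0 : Z ⟶ A) (𝟙 A) := by
  refine ⟨hD.defl_of_isIso _ (by infer_instance), zero_comp, fun W g hg => ?_⟩
  have hg0 : g = 0 := by simpa using hg
  exact ⟨0, by simp [hg0], fun y _ => hZ.eq_of_tgt y 0⟩

/-- Preimage of a subobject under a deflation (Noether-style lemma), proved
from the 3×3 axiom. -/
theorem preimage_ses (hD : IsWeaklyExact D) [HasZeroObject C] {A C0 P B Bt T : C}
    {i : A ⟶ C0} {p : C0 ⟶ P} {k : B ⟶ P} {t : P ⟶ T} {kB : Bt ⟶ C0}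
    (h1 : IsShortExact D i p) (h2 : IsShortExact D k t)
    (hkB : IsKernelOf kB (p ≫ t)) :
    ∃ (i' : A ⟶ Bt) (v : Bt ⟶ B), i' ≫ kB = i ∧ v ≫ k = kB ≫ p ∧ IsShortExact D i' v := by
  obtain ⟨Z, hZ⟩ := HasZeroObject.zero (C := C)
  obtain ⟨i', hi', -⟩ := hkB.2 i (by rw [← Category.assoc, h1.2.1, zero_comp])
  obtain ⟨v, hv, -⟩ := h2.2.2 (kB ≫ p) (by rw [Category.assoc, hkB.1])
  refine ⟨i', v, hi', hv,
    hD.three_by_three i' v i p (0 : Z ⟶ T) (𝟙 T) (𝟙 A) kB k (0 : A ⟶ Z) (p ≫ t) t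
      ?_ ?_ ?_ ?_ (ses_id_zero hD hZ) ⟨hD.defl_comp _ _ h1.1 h2.1, hkB⟩ h2 h1
      (ses_zero_id hD hZ)⟩
  · rw [Category.id_comp, hi']
  · exact hv
  · rw [← Category.assoc, h1.2.1, zero_comp, zero_comp]
  · rw [Category.comp_id]

/-- If `A ⊆ B ⊆ C` are subobjects (with short exact structures in `C`), then
`A ⊆ B` is part of a short exact sequence with quotient `ker (C/A → C/B)`. -/
theorem sub_ses (hD : IsWeaklyExact D) [HasZeroObject C] {A B C0 P Q S : C}
    {i : A ⟶ C0} {p : C0 ⟶ P} {j : B ⟶ C0} {q : C0 ⟶ Q} {u : A ⟶ B} {π : P ⟶ Q} {kS : S ⟶ P}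
    (h1 : IsShortExact D i p) (h2 : IsShortExact D j q)
    (hu : u ≫ j = i) (hπ : p ≫ π = q) (hkS : IsKernelOf kS π) :
    ∃ v : B ⟶ S, v ≫ kS = j ≫ p ∧ IsShortExact D u v := by
  obtain ⟨Z, hZ⟩ := HasZeroObject.zero (C := C)
  have hDπ : D π := hD.defl_cancel p π (by rw [hπ]; exact h2.1) h1.1
  obtain ⟨v, hv, -⟩ := hkS.2 (j ≫ p) (by rw [Category.assoc, hπ, h2.2.1])
  refine ⟨v, hv,
    hD.three_by_three u v i p (0 : Z ⟶ Q) (𝟙 Q) (𝟙 A) j kS (0 : A ⟶ Z) q π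
      ?_ ?_ ?_ ?_ (ses_id_zero hD hZ) h2 ⟨hDπ, hkS⟩ h1 (ses_zero_id hD hZ)⟩
  · rw [Category.id_comp, hu]
  · exact hv
  · rw [← hu, Category.assoc, h2.2.1, comp_zero, zero_comp]
  · rw [Category.comp_id, hπ]

/-- If `N ⊆ V` with quotient `Q`, `X ⊆ V` with quotient `R`, and `N`
surjects onto `R`, then `X` surjects onto `Q` (a covering lemma). -/
theorem cover_defl (hD : IsWeaklyExact D) [HasZeroObject C] {N V0 Q X R : C}
    {k : N ⟶ V0} {ϖ : V0 ⟶ Q} {f0 : X ⟶ V0} {ρ : V0 ⟶ R}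
    (h1 : IsShortExact D k ϖ) (h2 : IsShortExact D f0 ρ) (hs : D (k ≫ ρ)) :
    D (f0 ≫ ϖ) := by
  obtain ⟨Z, hZ⟩ := HasZeroObject.zero (C := C)
  obtain ⟨P, kP, hkP, -⟩ := hD.defl_kernel _ hs
  obtain ⟨u, hu, -⟩ := h2.2.2 (kP ≫ k) (by rw [Category.assoc, hkP.1])
  exact (hD.three_by_three u (f0 ≫ ϖ) k ϖ (𝟙 R) (0 : R ⟶ Z) kP f0 (𝟙 Q) (k ≫ ρ) ρ (0 : Q ⟶ Z)
    hu (Category.comp_id _) (Category.comp_id _).symm (by rw [comp_zero, comp_zero])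
    ⟨hs, hkP⟩ h2 (ses_id_zero hD hZ) h1 (ses_id_zero hD hZ)).1

end Helpers
section Adm

variable {C : Type u} [Category.{v} C] [HasZeroMorphisms C] {D : MorphismProperty C}

/-- In an admissible complex, `Z i ⟶ X (i+1) ⟶ Co i` is short exact (in
particular `c i` is a deflation). -/
theorem adm_mc (hD : IsWeaklyExact D) (X : AdmComplexData D) (i : ℤ) :
    IsShortExact D (X.m i) (X.c i) := by
  obtain ⟨Q, p, hp, hk⟩ := X.infl_m i
  obtain ⟨K0, i0, hk0, hc0⟩ := hD.defl_kernel p hp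
  -- p is a cokernel of m i
  have hcm : IsCokernelOf p (X.m i) := by
    refine ⟨hk.1, fun W g hg => ?_⟩
    obtain ⟨φ, hφ, -⟩ := hk.2 i0 hk0.1
    exact hc0.2 g (by rw [← hφ, Category.assoc, hg, comp_zero])
  -- p is a cokernel of d i
  have hdp : X.d i ≫ p = 0 := by rw [← X.fac i, Category.assoc, hk.1, comp_zero]
  have hcd : IsCokernelOf p (X.d i) := by
    refine ⟨hdp, fun W g hg => ?_⟩
    refine hcm.2 g ?_
    apply hD.defl_epi (X.defl_e i)
    rw [← Category.assoc, X.fac i, hg, comp_zero]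
  -- compare the two cokernels of d i
  obtain ⟨u, hu, -⟩ := hcd.2 (X.c i) (X.coker i).1
  obtain ⟨u', hu', -⟩ := (X.coker i).2 p hcd.1
  have huu' : u ≫ u' = 𝟙 Q := by
    apply hcd.hom_ext
    rw [← Category.assoc, hu, hu', Category.comp_id]
  have hu'u : u' ≫ u = 𝟙 (X.Co i) := by
    apply (X.coker i).hom_ext
    rw [← Category.assoc, hu', hu, Category.comp_id]
  have hc : X.c i = p ≫ u := hu.symm
  have hDc : D (X.c i) := by
    rw [hc]; exact hD.defl_comp _ _ hp (hD.defl_of_isIso u ⟨u', huu', hu'u⟩)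
  refine ⟨hDc, by rw [hc, ← Category.assoc, hk.1, zero_comp], fun W g hg => ?_⟩
  refine hk.2 g ?_
  rw [← hu', ← Category.assoc, hg, zero_comp]

/-- `Hh i ⟶ Co i ⟶ Z (i+1)` is short exact (in particular `t i` is a
deflation). -/
theorem adm_kt (hD : IsWeaklyExact D) (X : AdmComplexData D) (i : ℤ) :
    IsShortExact D (X.k i) (X.t i) := by
  refine ⟨?_, X.ker i⟩
  exact hD.defl_cancel (X.c i) (X.t i) (by rw [X.ht i]; exact X.defl_e _) (adm_mc hD X i).1

/-- The induced morphism on images `Z` of a chain morphism. -/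
theorem chain_fZ (hD : IsWeaklyExact D) {A B : AdmComplexData D} (H : ChainHomData D A B)
    (i : ℤ) : ∃ fZ : A.Z i ⟶ B.Z i,
      A.e i ≫ fZ = H.f i ≫ B.e i ∧ fZ ≫ B.m i = A.m i ≫ H.f (i + 1) := by
  obtain ⟨K, κ, hκ, hcoκ⟩ := hD.defl_kernel _ (A.defl_e i)
  have h0 : κ ≫ (H.f i ≫ B.e i) = 0 := by
    apply (adm_mc hD B i).2.hom_ext
    rw [Category.assoc, Category.assoc, B.fac i, ← H.comm i, ← Category.assoc, ← A.fac i,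
      ← Category.assoc, hκ.1, zero_comp, zero_comp, zero_comp]
  obtain ⟨fZ, hfZ, -⟩ := hcoκ.2 (H.f i ≫ B.e i) h0
  refine ⟨fZ, hfZ, ?_⟩
  apply hD.defl_epi (A.defl_e i)
  rw [← Category.assoc, hfZ, Category.assoc, B.fac i, ← H.comm i, ← Category.assoc, A.fac i]

end Adm
section Main

variable {C : Type u} [Category.{v} C] [HasZeroMorphisms C]

/-- Level-`i` data used to build the long exact sequence. -/
structure Aux1 (D : MorphismProperty C) (A A' A'' : AdmComplexData D)
    (F : ChainHomData D A A') (G : ChainHomData D A' A'')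
    (fZ : ∀ j : ℤ, A.Z j ⟶ A'.Z j) (i : ℤ) where
  CC : C
  kCC : CC ⟶ A'.Co i
  hkCC : IsKernelOf kCC (G.fc i)
  hDGc : D (G.fc i)
  Y : C
  y : Y ⟶ A'.X (i + 1)
  hy : IsKernelOf y (A'.c i ≫ G.fc i)
  φY : Y ⟶ A.X (i + 1 + 1)
  hφY : φY ≫ F.f (i + 1 + 1) = y ≫ A'.d (i + 1)
  hφYc : φY ≫ A.c (i + 1) = 0
  β : Y ⟶ A.Z (i + 1)
  hβ : β ≫ A.m (i + 1) = φY
  hDβ : D β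
  Fcb : A.Co i ⟶ CC
  hFcb : Fcb ≫ kCC = F.fc i
  hDFcb : D Fcb
  tb : CC ⟶ A.Z (i + 1)
  hq : kCC ≫ A'.t i = tb ≫ fZ (i + 1)
  Z₁ : C
  kZ₁ : Z₁ ⟶ A.Co i
  hkZ₁ : IsKernelOf kZ₁ Fcb
  Z₂ : C
  kZ₂ : Z₂ ⟶ CC
  hkZ₂ : IsKernelOf kZ₂ tb
  ι₁ : Z₁ ⟶ A.Hh i
  hι₁ : ι₁ ≫ A.k i = kZ₁
  π₁ : A.Hh i ⟶ Z₂
  hses₁ : IsShortExact D ι₁ π₁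
  ι₂ : Z₂ ⟶ A'.Hh i
  hι₂ : ι₂ ≫ A'.k i = kZ₂ ≫ kCC
  hfH : F.fH i = π₁ ≫ ι₂

variable [HasZeroObject C]

theorem mkAux1 {D : MorphismProperty C} (hD : IsWeaklyExact D)
    {A A' A'' : AdmComplexData D} (F : ChainHomData D A A') (G : ChainHomData D A' A'')
    (hses : ∀ j : ℤ, IsShortExact D (F.f j) (G.f j))
    (fZ : ∀ j : ℤ, A.Z j ⟶ A'.Z j)
    (hfZ : ∀ j, A.e j ≫ fZ j = F.f j ≫ A'.e j)
    (gZ : ∀ j : ℤ, A'.Z j ⟶ A''.Z j)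
    (hgZm : ∀ j, gZ j ≫ A''.m j = A'.m j ≫ G.f (j + 1))
    (hDgZ : ∀ j, D (gZ j)) (i : ℤ) :
    Nonempty (Aux1 D A A' A'' F G fZ i) := by
  classical
  have mcA1 := adm_mc hD A (i + 1)
  have mcA := adm_mc hD A i
  have mcA' := adm_mc hD A' i
  have mcA'' := adm_mc hD A'' i
  have hDGc : D (G.fc i) := hD.defl_cancel (A'.c i) (G.fc i)
    (by rw [G.hfc i]; exact hD.defl_comp _ _ (hses (i + 1)).1 mcA''.1) mcA'.1
  have hDcGc : D (A'.c i ≫ G.fc i) := hD.defl_comp _ _ mcA'.1 hDGc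
  obtain ⟨CC, kCC, hkCC, -⟩ := hD.defl_kernel _ hDGc
  obtain ⟨Y, y, hy, -⟩ := hD.defl_kernel _ hDcGc
  -- (ft, ρ) : X_A ⊆ Y with quotient Z''
  obtain ⟨ft, ρ, hft, hρ, sesftρ⟩ :=
    preimage_ses hD (hses (i + 1)) mcA'' (by rw [← G.hfc i]; exact hy)
  -- (b', ϖ) : Z' ⊆ Y with quotient CC
  obtain ⟨b', ϖ, hb', hϖ, sesb'ϖ⟩ := preimage_ses hD mcA' ⟨hDGc, hkCC⟩ hy
  -- u : X' i ⟶ Y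
  obtain ⟨u, hu, -⟩ := hy.2 (A'.d i) (by rw [← Category.assoc, (A'.coker i).1, zero_comp])
  have hm''d : A''.m i ≫ A''.d (i + 1) = 0 := by
    apply hD.defl_epi (A''.defl_e i)
    rw [← Category.assoc, A''.fac i, A''.dd i, comp_zero]
  have hm'd : A'.m i ≫ A'.d (i + 1) = 0 := by
    apply hD.defl_epi (A'.defl_e i)
    rw [← Category.assoc, A'.fac i, A'.dd i, comp_zero]
  have huρ : u ≫ ρ = G.f i ≫ A''.e i := by
    apply mcA''.2.hom_ext
    simp only [Category.assoc]
    rw [hρ, ← Category.assoc, hu, G.comm i, A''.fac i]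
  -- φY
  have hyd : (y ≫ A'.d (i + 1)) ≫ G.f (i + 1 + 1) = 0 := by
    rw [Category.assoc, G.comm (i + 1), ← Category.assoc, ← hρ, Category.assoc, hm''d,
      comp_zero]
  obtain ⟨φY, hφY, -⟩ := (hses (i + 1 + 1)).2.2 (y ≫ A'.d (i + 1)) hyd
  have hftφ : ft ≫ φY = A.d (i + 1) := by
    apply (hses (i + 1 + 1)).2.hom_ext
    rw [Category.assoc, hφY, ← Category.assoc, hft, F.comm (i + 1)]
  have huφ : u ≫ φY = 0 := by
    apply (hses (i + 1 + 1)).2.hom_ext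
    rw [Category.assoc, hφY, ← Category.assoc, hu, A'.dd i, zero_comp]
  -- τ vanishing
  have hcoρ : IsCokernelOf ρ ft := hD.ses_coker sesftρ
  obtain ⟨τ', hτ', -⟩ := hcoρ.2 (φY ≫ A.c (i + 1))
    (by rw [← Category.assoc, hftφ, (A.coker (i + 1)).1])
  have hτ'0 : τ' = 0 := by
    apply hD.defl_epi (hD.defl_comp _ _ (hses i).1 (A''.defl_e i))
    rw [← huρ, Category.assoc, hτ', ← Category.assoc, huφ, zero_comp, comp_zero]
  have hφYc : φY ≫ A.c (i + 1) = 0 := by rw [← hτ', hτ'0, comp_zero]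
  obtain ⟨β, hβ, -⟩ := mcA1.2.2 φY hφYc
  have hftβ : ft ≫ β = A.e (i + 1) := by
    apply mcA1.2.hom_ext
    rw [Category.assoc, hβ, hftφ, A.fac (i + 1)]
  have hb'φ : b' ≫ φY = 0 := by
    apply (hses (i + 1 + 1)).2.hom_ext
    rw [Category.assoc, hφY, ← Category.assoc, hb', hm'd, zero_comp]
  have hb'β : b' ≫ β = 0 := by
    apply mcA1.2.hom_ext
    rw [Category.assoc, hβ, hb'φ, zero_comp]
  -- Fcb
  have hFcGc : F.fc i ≫ G.fc i = 0 := by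
    apply hD.defl_epi mcA.1
    rw [← Category.assoc, F.hfc i, Category.assoc, G.hfc i, ← Category.assoc,
      (hses (i + 1)).2.1, zero_comp, comp_zero]
  obtain ⟨Fcb, hFcb, -⟩ := hkCC.2 (F.fc i) hFcGc
  have hcFcb : A.c i ≫ Fcb = ft ≫ ϖ := by
    apply hkCC.hom_ext
    rw [Category.assoc, hFcb, Category.assoc, hϖ, ← Category.assoc, hft, F.hfc i]
  have hb'ρ : b' ≫ ρ = gZ i := by
    apply mcA''.2.hom_ext
    rw [Category.assoc, hρ, ← Category.assoc, hb', hgZm i]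
  have hDftϖ : D (ft ≫ ϖ) := cover_defl hD sesb'ϖ sesftρ (by rw [hb'ρ]; exact hDgZ i)
  have hDFcb : D Fcb := hD.defl_cancel (A.c i) Fcb (by rw [hcFcb]; exact hDftϖ) mcA.1
  -- tb
  have hcoϖ : IsCokernelOf ϖ b' := hD.ses_coker sesb'ϖ
  obtain ⟨tb, htb, -⟩ := hcoϖ.2 β hb'β
  have htbt : Fcb ≫ tb = A.t i := by
    apply hD.defl_epi mcA.1
    rw [← Category.assoc, hcFcb, Category.assoc, htb, hftβ, A.ht i]
  have hDtb : D tb := hD.defl_cancel Fcb tb (by rw [htbt]; exact (adm_kt hD A i).1) hDFcb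
  have hDβ : D β := by rw [← htb]; exact hD.defl_comp _ _ sesb'ϖ.1 hDtb
  obtain ⟨Z₁, kZ₁, hkZ₁, -⟩ := hD.defl_kernel _ hDFcb
  obtain ⟨Z₂, kZ₂, hkZ₂, -⟩ := hD.defl_kernel _ hDtb
  -- ι₁
  obtain ⟨ι₁, hι₁, -⟩ := (A.ker i).2 kZ₁
    (by rw [← htbt, ← Category.assoc, hkZ₁.1, zero_comp])
  obtain ⟨π₁, hπ₁, hses₁⟩ := sub_ses hD ⟨hDFcb, hkZ₁⟩ (adm_kt hD A i) hι₁ htbt hkZ₂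
  -- hq
  have hq : kCC ≫ A'.t i = tb ≫ fZ (i + 1) := by
    apply hD.defl_epi hDftϖ
    have e1 : (ft ≫ ϖ) ≫ (kCC ≫ A'.t i) = F.f (i + 1) ≫ A'.e (i + 1) := by
      simp only [Category.assoc]
      rw [reassoc_of% hϖ, reassoc_of% hft, A'.ht i]
    have e2 : (ft ≫ ϖ) ≫ (tb ≫ fZ (i + 1)) = F.f (i + 1) ≫ A'.e (i + 1) := by
      simp only [Category.assoc]
      rw [reassoc_of% htb, reassoc_of% hftβ, hfZ (i + 1)]
    rw [e1, e2]
  -- ι₂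
  obtain ⟨ι₂, hι₂, -⟩ := (A'.ker i).2 (kZ₂ ≫ kCC)
    (by rw [Category.assoc, hq, ← Category.assoc, hkZ₂.1, zero_comp])
  have hfH : F.fH i = π₁ ≫ ι₂ := by
    apply (A'.ker i).hom_ext
    rw [F.hfH i, Category.assoc, hι₂, ← Category.assoc, hπ₁, Category.assoc, hFcb]
  exact ⟨Aux1.mk CC kCC hkCC hDGc Y y hy φY hφY hφYc β hβ hDβ Fcb hFcb hDFcb tb hq
    Z₁ kZ₁ hkZ₁ Z₂ kZ₂ hkZ₂ ι₁ hι₁ π₁ hses₁ ι₂ hι₂ hfH⟩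

end Main
section Step3

variable {C : Type u} [Category.{v} C] [HasZeroMorphisms C] [HasZeroObject C]

theorem step3 {D : MorphismProperty C} (hD : IsWeaklyExact D)
    {A A' A'' : AdmComplexData D} (F : ChainHomData D A A') (G : ChainHomData D A' A'')
    (hses : ∀ j : ℤ, IsShortExact D (F.f j) (G.f j))
    (fZ : ∀ j : ℤ, A.Z j ⟶ A'.Z j)
    (hfZm : ∀ j, fZ j ≫ A'.m j = A.m j ≫ F.f (j + 1))
    (gZ : ∀ j : ℤ, A'.Z j ⟶ A''.Z j)
    (hgZ : ∀ j, A'.e j ≫ gZ j = G.f j ≫ A''.e j)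
    (hgZm : ∀ j, gZ j ≫ A''.m j = A'.m j ≫ G.f (j + 1))
    (hDgZ : ∀ j, D (gZ j)) (i : ℤ)
    -- level-i data
    {CC : C} {kCC : CC ⟶ A'.Co i} (hkCC : IsKernelOf kCC (G.fc i)) (hDGc : D (G.fc i))
    {Y : C} {y : Y ⟶ A'.X (i + 1)} (hy : IsKernelOf y (A'.c i ≫ G.fc i))
    {φY : Y ⟶ A.X (i + 1 + 1)} (hφY : φY ≫ F.f (i + 1 + 1) = y ≫ A'.d (i + 1))
    (hφYc : φY ≫ A.c (i + 1) = 0)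
    {β : Y ⟶ A.Z (i + 1)} (hβ : β ≫ A.m (i + 1) = φY) (hDβ : D β)
    {tb : CC ⟶ A.Z (i + 1)} (hq : kCC ≫ A'.t i = tb ≫ fZ (i + 1))
    {Z₂ : C} {kZ₂ : Z₂ ⟶ CC} (hkZ₂ : IsKernelOf kZ₂ tb)
    {ι₂ : Z₂ ⟶ A'.Hh i} (hι₂ : ι₂ ≫ A'.k i = kZ₂ ≫ kCC)
    -- level-(i+1) data
    {CC1 : C} {kCC1 : CC1 ⟶ A'.Co (i + 1)} (hkCC1 : IsKernelOf kCC1 (G.fc (i + 1)))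
    {Fcb1 : A.Co (i + 1) ⟶ CC1} (hFcb1 : Fcb1 ≫ kCC1 = F.fc (i + 1)) (hDFcb1 : D Fcb1)
    {Z₁' : C} {kZ₁' : Z₁' ⟶ A.Co (i + 1)} (hkZ₁' : IsKernelOf kZ₁' Fcb1) :
    ∃ (Z₃ : C) (ι₃ : Z₃ ⟶ A''.Hh i) (π₃ : A''.Hh i ⟶ Z₁') (π₂ : A'.Hh i ⟶ Z₃),
      IsShortExact D ι₃ π₃ ∧ IsShortExact D ι₂ π₂ ∧ G.fH i = π₂ ≫ ι₃ := by
  classical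
  have mcA1 := adm_mc hD A (i + 1)
  have mcA'1 := adm_mc hD A' (i + 1)
  have mcA''1 := adm_mc hD A'' (i + 1)
  have mcA' := adm_mc hD A' i
  have ktA'' := adm_kt hD A'' i
  have ktA' := adm_kt hD A' i
  -- M = ker gZ (i+1), W = ker (e' ≫ gZ)
  obtain ⟨M, μ, hμ, -⟩ := hD.defl_kernel _ (hDgZ (i + 1))
  have hDeg : D (A'.e (i + 1) ≫ gZ (i + 1)) :=
    hD.defl_comp _ _ (A'.defl_e (i + 1)) (hDgZ (i + 1))
  obtain ⟨W, w, hw, -⟩ := hD.defl_kernel _ hDeg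
  obtain ⟨K', κ', hκ', -⟩ := hD.defl_kernel _ (A'.defl_e (i + 1))
  obtain ⟨ω, ψb, hω, hψb, sesωψ⟩ :=
    preimage_ses hD ⟨A'.defl_e (i + 1), hκ'⟩ ⟨hDgZ (i + 1), hμ⟩ hw
  -- μA : M ⟶ A.X (i+1+1)
  have hμm : (μ ≫ A'.m (i + 1)) ≫ G.f (i + 1 + 1) = 0 := by
    rw [Category.assoc, ← hgZm (i + 1), ← Category.assoc, hμ.1, zero_comp]
  obtain ⟨μA, hμA, -⟩ := (hses (i + 1 + 1)).2.2 (μ ≫ A'.m (i + 1)) hμm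
  have hμAc : μA ≫ (A.c (i + 1) ≫ Fcb1) = 0 := by
    apply hkCC1.hom_ext
    simp only [Category.assoc]
    rw [hFcb1, F.hfc (i + 1), reassoc_of% hμA, mcA'1.2.1, comp_zero, zero_comp]
  have hkμA : IsKernelOf μA (A.c (i + 1) ≫ Fcb1) := by
    refine ⟨hμAc, fun V0 v hv => ?_⟩
    have h1 : v ≫ F.f (i + 1 + 1) ≫ A'.c (i + 1) = 0 := by
      rw [← F.hfc (i + 1), ← hFcb1]
      rw [show v ≫ A.c (i + 1) ≫ Fcb1 ≫ kCC1 = (v ≫ (A.c (i + 1) ≫ Fcb1)) ≫ kCC1 by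
        simp only [Category.assoc], hv, zero_comp]
    obtain ⟨v1, hv1, -⟩ := mcA'1.2.2 (v ≫ F.f (i + 1 + 1))
      (by rw [Category.assoc]; exact h1)
    have h2 : v1 ≫ gZ (i + 1) = 0 := by
      apply mcA''1.2.hom_ext
      rw [Category.assoc, hgZm (i + 1), ← Category.assoc, hv1, Category.assoc,
        (hses (i + 1 + 1)).2.1, comp_zero, zero_comp]
    obtain ⟨v2, hv2, -⟩ := hμ.2 v1 h2
    have hv2A : v2 ≫ μA = v := by
      apply (hses (i + 1 + 1)).2.hom_ext
      rw [Category.assoc, hμA, ← Category.assoc, hv2, hv1]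
    refine ⟨v2, hv2A, fun z hz => ?_⟩
    apply hμ.hom_ext
    apply mcA'1.2.hom_ext
    simp only [Category.assoc]
    calc z ≫ μ ≫ A'.m (i + 1) = z ≫ μA ≫ F.f (i + 1 + 1) := by rw [hμA]
      _ = v ≫ F.f (i + 1 + 1) := by rw [← Category.assoc, hz]
      _ = v1 ≫ A'.m (i + 1) := hv1.symm
      _ = v2 ≫ μ ≫ A'.m (i + 1) := by rw [← Category.assoc, hv2]
  -- (jM, πM) : Z_A (i+1) ⊆ M with quotient Z₁'
  obtain ⟨jM, πM, hjM, hπM, sesjπ⟩ := preimage_ses hD mcA1 ⟨hDFcb1, hkZ₁'⟩ hkμA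
  -- (a1, θ) : Y ⊆ W with quotient H'' i
  have hwk : IsKernelOf w ((A'.c i ≫ G.fc i) ≫ A''.t i) := by
    have he : (A'.c i ≫ G.fc i) ≫ A''.t i = A'.e (i + 1) ≫ gZ (i + 1) := by
      rw [G.hfc i, Category.assoc, A''.ht i, hgZ (i + 1)]
    rw [he]; exact hw
  obtain ⟨a1, θ, ha1, hθ, sesa1θ⟩ :=
    preimage_ses hD ⟨hD.defl_comp _ _ mcA'.1 hDGc, hy⟩ ktA'' hwk
  have haψμ : a1 ≫ ψb ≫ μA = φY := by
    apply (hses (i + 1 + 1)).2.hom_ext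
    simp only [Category.assoc]
    rw [hμA, reassoc_of% hψb, A'.fac (i + 1), reassoc_of% ha1, hφY]
  have haχ : a1 ≫ (ψb ≫ πM) = 0 := by
    apply hkZ₁'.hom_ext
    simp only [Category.assoc]
    rw [hπM, reassoc_of% haψμ, hφYc, zero_comp]
  have hDχ : D (ψb ≫ πM) := hD.defl_comp _ _ sesωψ.1 sesjπ.1
  obtain ⟨π₃, hπ₃, -⟩ := (hD.ses_coker sesa1θ).2 (ψb ≫ πM) haχ
  have hDπ₃ : D π₃ := hD.defl_cancel θ π₃ (by rw [hπ₃]; exact hDχ) sesa1θ.1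
  obtain ⟨Z₃, ι₃, hι₃, -⟩ := hD.defl_kernel _ hDπ₃
  obtain ⟨V, kV, hkV, -⟩ := hD.defl_kernel _ hDχ
  obtain ⟨at_, θt, hat, hθt, sesatθt⟩ :=
    preimage_ses hD sesa1θ ⟨hDπ₃, hι₃⟩ (by rw [hπ₃]; exact hkV)
  obtain ⟨ωt, ρV, hωt, hρV, sesωρ⟩ := preimage_ses hD sesωψ sesjπ hkV
  -- at_ ≫ ρV = β
  have haβ : a1 ≫ ψb = β ≫ jM := by
    apply hkμA.hom_ext
    simp only [Category.assoc]
    rw [haψμ, hjM, hβ]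
  have hatρ : at_ ≫ ρV = β := by
    apply sesjπ.2.hom_ext
    rw [Category.assoc, hρV, ← Category.assoc, hat, haβ]
  have hDωθ : D (ωt ≫ θt) := cover_defl hD sesatθt sesωρ (by rw [hatρ]; exact hDβ)
  -- (j', r')
  obtain ⟨j', r', hj', hr', sesjr⟩ :=
    preimage_ses hD mcA' ktA' (by rw [A'.ht i]; exact hκ')
  have hj'ωθ : j' ≫ (ωt ≫ θt) = 0 := by
    apply hι₃.hom_ext
    apply (A''.ker i).hom_ext
    simp only [Category.assoc]
    rw [reassoc_of% hθt, reassoc_of% hωt, hθ, reassoc_of% hω, reassoc_of% hj',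
      reassoc_of% mcA'.2.1]
    simp only [zero_comp]
  obtain ⟨π₂, hπ₂, -⟩ := (hD.ses_coker sesjr).2 (ωt ≫ θt) hj'ωθ
  have hDπ₂ : D π₂ := hD.defl_cancel r' π₂ (by rw [hπ₂]; exact hDωθ) sesjr.1
  have hgH : G.fH i = π₂ ≫ ι₃ := by
    apply hD.defl_epi sesjr.1
    apply (A''.ker i).hom_ext
    simp only [Category.assoc]
    rw [G.hfH i, reassoc_of% hr', reassoc_of% hπ₂, reassoc_of% hθt, reassoc_of% hωt, hθ,
      reassoc_of% hω]
  -- kernel property of ι₂ for π₂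
  have hι₂mono : ∀ {T : C} {u v : T ⟶ Z₂}, u ≫ ι₂ = v ≫ ι₂ → u = v := by
    intro T u v h
    apply hkZ₂.hom_ext
    apply hkCC.hom_ext
    simp only [Category.assoc, ← hι₂]
    simp only [← Category.assoc]
    rw [h]
  have hses₂ : IsShortExact D ι₂ π₂ := by
    refine ⟨hDπ₂, ?_, ?_⟩
    · apply hι₃.hom_ext
      apply (A''.ker i).hom_ext
      simp only [Category.assoc]
      rw [reassoc_of% hgH.symm, G.hfH i, reassoc_of% hι₂, hkCC.1]
      simp only [comp_zero, zero_comp]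
    · intro T v hv
      have h1 : (v ≫ A'.k i) ≫ G.fc i = 0 := by
        simp only [Category.assoc]
        rw [← G.hfH i, reassoc_of% hgH, reassoc_of% hv]
        simp only [zero_comp]
      obtain ⟨vC, hvC, -⟩ := hkCC.2 (v ≫ A'.k i) h1
      have hfZmono : ∀ {T' : C} {x x' : T' ⟶ A.Z (i + 1)},
          x ≫ fZ (i + 1) = x' ≫ fZ (i + 1) → x = x' := by
        intro T' x x' hx
        apply mcA1.2.hom_ext
        apply (hses (i + 1 + 1)).2.hom_ext
        simp only [Category.assoc, ← hfZm (i + 1)]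
        simp only [← Category.assoc]
        rw [hx]
      have h2 : vC ≫ tb = 0 := by
        apply hfZmono
        rw [Category.assoc, ← hq, ← Category.assoc, hvC, Category.assoc, (A'.ker i).1,
          comp_zero, zero_comp]
      obtain ⟨h, hh, -⟩ := hkZ₂.2 vC h2
      have hmain : h ≫ ι₂ = v := by
        apply (A'.ker i).hom_ext
        rw [Category.assoc, hι₂, ← Category.assoc, hh, hvC]
      exact ⟨h, hmain, fun z hz => hι₂mono (by rw [hz, hmain])⟩
  exact ⟨Z₃, ι₃, π₃, π₂, ⟨hDπ₃, hι₃⟩, hses₂, hgH⟩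

end Step3
/-- **Theorem 6.7.**  A pointwise short exact sequence of admissible chain
complexes in a weakly exact category gives rise to a long exact sequence of
cohomology objects
`⋯ ⟶ Hⁱ(A) ⟶ Hⁱ(A') ⟶ Hⁱ(A'') ⟶ H^{i+1}(A) ⟶ H^{i+1}(A') ⟶ ⋯`
(exactness in the sense of Definition 1.1: there is a system of objects
through which consecutive morphisms factor by short exact sequences). -/
theorem long_exact_cohomology_sequence {C : Type u} [Category.{v} C]
    [HasZeroMorphisms C] [HasZeroObject C]
    (D : MorphismProperty C) (hD : IsWeaklyExact D)
    (A A' A'' : AdmComplexData D)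
    (F : ChainHomData D A A') (G : ChainHomData D A' A'')
    (hses : ∀ i : ℤ, IsShortExact D (F.f i) (G.f i)) :
    ∃ δ : ∀ i : ℤ, A''.Hh i ⟶ A.Hh (i + 1),
      ∃ (Z₁ Z₂ Z₃ : ℤ → C)
        (ι₁ : ∀ i : ℤ, Z₁ i ⟶ A.Hh i) (π₁ : ∀ i : ℤ, A.Hh i ⟶ Z₂ i)
        (ι₂ : ∀ i : ℤ, Z₂ i ⟶ A'.Hh i) (π₂ : ∀ i : ℤ, A'.Hh i ⟶ Z₃ i)
        (ι₃ : ∀ i : ℤ, Z₃ i ⟶ A''.Hh i) (π₃ : ∀ i : ℤ, A''.Hh i ⟶ Z₁ (i + 1)),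
        (∀ i, F.fH i = π₁ i ≫ ι₂ i) ∧ (∀ i, G.fH i = π₂ i ≫ ι₃ i) ∧
        (∀ i, δ i = π₃ i ≫ ι₁ (i + 1)) ∧
        (∀ i, IsShortExact D (ι₁ i) (π₁ i)) ∧
        (∀ i, IsShortExact D (ι₂ i) (π₂ i)) ∧
        (∀ i, IsShortExact D (ι₃ i) (π₃ i)) := by
  classical
  choose fZ hfZ hfZm using fun j => chain_fZ hD F j
  choose gZ hgZ hgZm using fun j => chain_fZ hD G j
  have hDgZ : ∀ j, D (gZ j) := fun j => hD.defl_cancel (A'.e j) (gZ j)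
    (by rw [hgZ j]; exact hD.defl_comp _ _ (hses j).1 (A''.defl_e j)) (A'.defl_e j)
  have aux : ∀ j : ℤ, Aux1 D A A' A'' F G fZ j := fun j =>
    (mkAux1 hD F G hses fZ hfZ gZ hgZm hDgZ j).some
  have h3 : ∀ i : ℤ, ∃ (Z₃ : C) (ι₃ : Z₃ ⟶ A''.Hh i) (π₃ : A''.Hh i ⟶ (aux (i + 1)).Z₁)
      (π₂ : A'.Hh i ⟶ Z₃), IsShortExact D ι₃ π₃ ∧ IsShortExact D (aux i).ι₂ π₂ ∧
      G.fH i = π₂ ≫ ι₃ := fun i =>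
    step3 hD F G hses fZ hfZm gZ hgZ hgZm hDgZ i (aux i).hkCC (aux i).hDGc (aux i).hy
      (aux i).hφY (aux i).hφYc (aux i).hβ (aux i).hDβ (aux i).hq (aux i).hkZ₂ (aux i).hι₂
      (aux (i + 1)).hkCC (aux (i + 1)).hFcb (aux (i + 1)).hDFcb (aux (i + 1)).hkZ₁
  choose Z₃ ι₃ π₃ π₂ hses₃ hses₂ hgH using h3
  exact ⟨fun i => π₃ i ≫ (aux (i + 1)).ι₁, fun i => (aux i).Z₁, fun i => (aux i).Z₂, Z₃,
    fun i => (aux i).ι₁, fun i => (aux i).π₁, fun i => (aux i).ι₂, π₂, ι₃, π₃,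
    fun i => (aux i).hfH, hgH, fun i => rfl, fun i => (aux i).hses₁, hses₂, hses₃⟩
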